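/- Let M be a monomial ideal with LCM lattice P and for each p ∈ P set m_p = gcd{ t̄ : t > p } / p̄ (with m_maximum = maximum's monomial). If gcd(m_p, m_q) ≠ 1, then p and q are comparable in P. -/

import Mathlib

/-!
If `p` and `q` are incomparable, then `p < p ⊔ q` and `p ⊔ q` lies in the LCM lattice, so the
gcd of the elements above `p` divides `p ⊔ q`. Hence a variable `x_j` dividing `m_p` has a larger
exponent in `p ⊔ q` than in `p`, i.e. `p j < q j`; symmetrically `q j < p j` if `x_j` divides `m_q`.
-/

open Finset

section LCMLattice

variable {ι α : Type*} [SemilatticeSup α] [OrderBot α]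

def lcmLattice (m : ι → α) : Set α :=
  {v | v = ⊥ ∨ ∃ s : Finset ι, s.Nonempty ∧ v = s.sup m}

theorem sup_mem_lcmLattice {m : ι → α} {p q : α} (hp : p ∈ lcmLattice m)
    (hq : q ∈ lcmLattice m) : p ⊔ q ∈ lcmLattice m := by
  classical
  rcases hp with rfl | ⟨s, hs, rfl⟩
  · rwa [bot_sup_eq]
  rcases hq with rfl | ⟨t, -, rfl⟩
  · rw [sup_bot_eq]
    exact Or.inr ⟨s, hs, rfl⟩
  exact Or.inr ⟨s ∪ t, hs.mono subset_union_left, sup_union.symm⟩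

end LCMLattice

section GcdAbove

variable {σ : Type*}

/-- The exponent vector of `gcd{ t ∈ L : t > v }`. -/
noncomputable def gcdAbove (L : Set (σ → ℕ)) (v : σ → ℕ) : σ → ℕ :=
  fun j => sInf {x : ℕ | ∃ t ∈ L, v < t ∧ t j = x}

theorem gcdAbove_le {L : Set (σ → ℕ)} {v t : σ → ℕ} (ht : t ∈ L) (hvt : v < t) :
    gcdAbove L v ≤ t := by
  intro j
  exact csInf_le (OrderBot.bddBelow _) ⟨t, ht, hvt, rfl⟩

theorem apply_lt_of_apply_lt_gcdAbove {L : Set (σ → ℕ)}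
    (hL : ∀ a ∈ L, ∀ b ∈ L, a ⊔ b ∈ L) {p q : σ → ℕ} (hp : p ∈ L) (hq : q ∈ L)
    (hqp : ¬ q ≤ p) {j : σ} (hj : p j < gcdAbove L p j) : p j < q j := by
  have hle := gcdAbove_le (hL p hp q hq) (left_lt_sup.2 hqp) j
  exact not_le.1 (left_lt_sup.1 (hj.trans_le hle))

end GcdAbove

theorem stmt_15_general (k n : ℕ) (m : Fin n → (Fin k → ℕ))
    (L : Set (Fin k → ℕ))
    (hL : L = {v | v = 0 ∨ ∃ s : Finset (Fin n), s.Nonempty ∧ v = s.sup m})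
    (g : (Fin k → ℕ) → (Fin k → ℕ))
    (hg : ∀ v, g v = if v = Finset.univ.sup m then v
      else fun j => sInf {x : ℕ | ∃ t ∈ L, v < t ∧ t j = x})
    (p q : Fin k → ℕ) (hp : p ∈ L) (hq : q ∈ L)
    (hgcd : ∃ j : Fin k, 0 < min (g p j - p j) (g q j - q j)) :
    p ≤ q ∨ q ≤ p := by
  have hsup : ∀ a ∈ L, ∀ b ∈ L, a ⊔ b ∈ L := by
    subst hL
    exact fun a ha b hb => sup_mem_lcmLattice (m := m) ha hb
  obtain ⟨j, hj⟩ := hgcd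
  have hgap : ∀ v, 0 < g v j - v j → v j < gcdAbove L v j := by
    intro v hv
    rw [hg] at hv
    split_ifs at hv
    · simp at hv
    · exact Nat.lt_of_sub_pos hv
  by_contra! hpq
  have hpq' := apply_lt_of_apply_lt_gcdAbove hsup hp hq hpq.2 (hgap p (by omega))
  have hqp' := apply_lt_of_apply_lt_gcdAbove hsup hq hp hpq.1 (hgap q (by omega))
  omega

/-- Monomials in `k` variables are modeled as exponent vectors `Fin k → ℕ`;
divisibility is the pointwise order, the monomial `1` is `0`, and division of monomials
is pointwise subtraction.  For an element `p` of the LCM lattice `L` of the monomial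
ideal generated by the `m i`, set `g p = gcd{ t : t ∈ L, t > p }` (with `g` of the
maximum defined to be the maximum itself), and `m_p = g p / p`.

If `gcd(m_p, m_q) ≠ 1` then `p` and `q` are comparable. -/
theorem stmt_15 (k n : ℕ) (m : Fin n → (Fin k → ℕ))
    (hmin : ∀ i j : Fin n, i ≠ j → ¬ m i ≤ m j)
    (L : Set (Fin k → ℕ))
    (hL : L = {v | v = 0 ∨ ∃ s : Finset (Fin n), s.Nonempty ∧ v = s.sup m})
    (g : (Fin k → ℕ) → (Fin k → ℕ))
    (hg : ∀ v, g v = if v = Finset.univ.sup m then v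
      else fun j => sInf {x : ℕ | ∃ t ∈ L, v < t ∧ t j = x})
    (p q : Fin k → ℕ) (hp : p ∈ L) (hq : q ∈ L)
    (hgcd : ∃ j : Fin k, 0 < min (g p j - p j) (g q j - q j)) :
    p ≤ q ∨ q ≤ p :=
  stmt_15_general k n m L hL g hg p q hp hq hgcd
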